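/- arXiv:2410.15384 — 3 statements merged into one kernel-verified Lean document; each statement's English description precedes it below -/
import Mathlib

section
/- The cardinal invariant 𝔟** satisfies 𝔟 ≤ 𝔟** ≤ 𝔡, i.e. the minimum cardinal κ such that every ≤*-unbounded family B ⊆ ℕ → ℕ contains a subfamily of cardinality at most κ which is unbounded in B lies between the bounding number 𝔟 and the dominating number 𝔡. (Lemma 2.6) -/
open Cardinal

/-- `f ≤* g`: `f n ≤ g n` for all but finitely many `n`. -/
def LeStar (f g : ℕ → ℕ) : Prop := ∀ᶠ n in Filter.atTop, f n ≤ g n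

/-- A family `B ⊆ ℕ → ℕ` is `≤*`-unbounded. -/
def UnboundedFam (B : Set (ℕ → ℕ)) : Prop := ¬ ∃ g : ℕ → ℕ, ∀ f ∈ B, LeStar f g

/-- A family `D ⊆ ℕ → ℕ` is `≤*`-dominating. -/
def DominatingFam (D : Set (ℕ → ℕ)) : Prop := ∀ f : ℕ → ℕ, ∃ g ∈ D, LeStar f g

/-- `B'` is unbounded in `B`: no element of `B` `≤*`-bounds all of `B'`. -/
def UnboundedIn (B' B : Set (ℕ → ℕ)) : Prop := ¬ ∃ f ∈ B, ∀ g ∈ B', LeStar g f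

/-- The bounding number `𝔟`. -/
noncomputable def bNum : Cardinal :=
  sInf {c : Cardinal | ∃ B : Set (ℕ → ℕ), UnboundedFam B ∧ #B = c}

/-- The dominating number `𝔡`. -/
noncomputable def dNum : Cardinal :=
  sInf {c : Cardinal | ∃ D : Set (ℕ → ℕ), DominatingFam D ∧ #D = c}

/-- The cardinal invariant `𝔟**`. -/
noncomputable def bStarStar : Cardinal :=
  sInf {c : Cardinal |
    ∀ B : Set (ℕ → ℕ), UnboundedFam B →
      ∃ B' ⊆ B, #B' ≤ c ∧ UnboundedIn B' B}

lemma leStar_trans {f g h : ℕ → ℕ} (h1 : LeStar f g) (h2 : LeStar g h) : LeStar f h :=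
  (h1.and h2).mono fun _ ⟨a, b⟩ => le_trans a b

lemma univ_unbounded : UnboundedFam (Set.univ : Set (ℕ → ℕ)) := by
  rintro ⟨g, hg⟩
  have h := hg (fun n => g n + 1) (Set.mem_univ _)
  obtain ⟨n, hn⟩ := h.exists
  simp only [] at hn; omega

lemma dNum_mem_bss : dNum ∈ {c : Cardinal |
    ∀ B : Set (ℕ → ℕ), UnboundedFam B →
      ∃ B' ⊆ B, #B' ≤ c ∧ UnboundedIn B' B} := by
  have hne : {c : Cardinal | ∃ D : Set (ℕ → ℕ), DominatingFam D ∧ #D = c}.Nonempty :=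
    ⟨#(Set.univ : Set (ℕ → ℕ)), Set.univ, fun f => ⟨f, Set.mem_univ _, Filter.Eventually.of_forall fun _ => le_rfl⟩, rfl⟩
  obtain ⟨D, hD, hDc⟩ := csInf_mem hne
  intro B hB
  have hB' : ∀ g : ℕ → ℕ, ∃ f, f ∈ B ∧ ¬ LeStar f g := by
    intro g
    by_contra h
    push_neg at h
    exact hB ⟨g, fun f hf => h f hf⟩
  choose φ hφB hφ using hB'
  refine ⟨φ '' D, ?_, ?_, ?_⟩
  · rintro _ ⟨g, _, rfl⟩; exact hφB g
  · exact (Cardinal.mk_image_le).trans_eq hDc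
  · rintro ⟨f, _, hf⟩
    obtain ⟨g, hgD, hfg⟩ := hD f
    exact hφ g (leStar_trans (hf (φ g) ⟨g, hgD, rfl⟩) hfg)

/-- Lemma 2.6: `𝔟 ≤ 𝔟** ≤ 𝔡`. -/
theorem bNum_le_bStarStar_le_dNum : bNum ≤ bStarStar ∧ bStarStar ≤ dNum := by
  constructor
  · apply le_csInf ⟨dNum, dNum_mem_bss⟩
    intro c hc
    obtain ⟨B', _, hcard, hunb⟩ := hc Set.univ univ_unbounded
    refine le_trans (csInf_le' ?_) hcard
    refine ⟨B', ?_, rfl⟩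
    rintro ⟨g, hg⟩
    exact hunb ⟨g, Set.mem_univ _, hg⟩
  · exact csInf_le' dNum_mem_bss
end

section
/- 𝔟 ≤ 𝔟**: for every cardinal κ, if every ≤*-unbounded family B ⊆ ℕ → ℕ contains a subfamily B' of cardinality at most κ which is unbounded in B, then κ is at least the bounding number 𝔟. (First inequality of Lemma 2.6) -/
open Cardinal

/-- First inequality of Lemma 2.6: `𝔟 ≤ 𝔟**`. -/
theorem bNum_le_of_unboundedIn_subfamily (κ : Cardinal)
    (h : ∀ B : Set (ℕ → ℕ), UnboundedFam B →
      ∃ B' ⊆ B, #B' ≤ κ ∧ UnboundedIn B' B) :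
    bNum ≤ κ := by
  have huniv : UnboundedFam (Set.univ : Set (ℕ → ℕ)) := by
    rintro ⟨g, hg⟩
    obtain ⟨n, hn⟩ := (hg (fun n => g n + 1) (Set.mem_univ _)).exists
    simp at hn
  obtain ⟨B', -, hcard, hub⟩ := h Set.univ huniv
  refine le_trans (csInf_le' ⟨B', ?_, rfl⟩) hcard
  intro ⟨g, hg⟩
  exact hub ⟨g, Set.mem_univ _, hg⟩
end

section
/- 𝔟** ≤ 𝔡: every ≤*-unbounded family B ⊆ ℕ → ℕ contains a subfamily B' of cardinality at most the dominating number 𝔡 which is unbounded in B; hence the minimum cardinal κ with this property for all unbounded B is at most 𝔡. (Second inequality of Lemma 2.6) -/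
open Cardinal

/-- Second inequality of Lemma 2.6: `𝔟** ≤ 𝔡`. -/
theorem bStarStar_le_dNum :
    (∀ B : Set (ℕ → ℕ), UnboundedFam B →
      ∃ B' ⊆ B, #B' ≤ dNum ∧ UnboundedIn B' B) ∧
    bStarStar ≤ dNum := by
  have hmain : ∀ B : Set (ℕ → ℕ), UnboundedFam B →
      ∃ B' ⊆ B, #B' ≤ dNum ∧ UnboundedIn B' B := by
    intro B hB
    have hne : {c : Cardinal | ∃ D : Set (ℕ → ℕ), DominatingFam D ∧ #D = c}.Nonempty :=
      ⟨#(Set.univ : Set (ℕ → ℕ)), Set.univ,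
        fun f => ⟨f, Set.mem_univ f, Filter.Eventually.of_forall fun n => le_refl _⟩, rfl⟩
    obtain ⟨D, hD, hDcard⟩ := csInf_mem hne
    have hch : ∀ g : ℕ → ℕ, ∃ f ∈ B, ¬ LeStar f g := by
      intro g
      by_contra h
      push_neg at h
      exact hB ⟨g, h⟩
    choose F hFB hF using hch
    refine ⟨F '' D, ?_, ?_, ?_⟩
    · rintro _ ⟨g, _, rfl⟩; exact hFB g
    · calc #(F '' D) ≤ #D := Cardinal.mk_image_le
        _ = dNum := hDcard
    · rintro ⟨f, hfB, hbound⟩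
      obtain ⟨g, hgD, hfg⟩ := hD f
      have h1 : LeStar (F g) f := hbound (F g) ⟨g, hgD, rfl⟩
      exact hF g ((h1.and hfg).mono fun n ⟨a, b⟩ => le_trans a b)
  exact ⟨hmain, csInf_le' hmain⟩
end
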